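/- arXiv:2509.17719 — 4 statements merged into one kernel-verified Lean document; each statement's English description precedes it below -/
import Mathlib

section
/- Let q be an odd prime power with q ≡ 1 (mod 4) and χ the quadratic character of F_q. Define S_n = Σ_A χ(det A) over all n×n symmetric tridiagonal matrices A over F_q. Then for every m ≥ 1, S_{2m} = q^{2m−1}(q−1)^m. -/
/-- The `n × n` symmetric tridiagonal matrix with diagonal entries `x` and
off-diagonal (super/sub-diagonal) entries `r`. -/
def triMat {R : Type*} [CommRing R] (n : ℕ) (x : Fin n → R) (r : Fin (n - 1) → R) :
    Matrix (Fin n) (Fin n) R :=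
  Matrix.of fun i j =>
    if i = j then x i
    else if h : (i : ℕ) + 1 = (j : ℕ) then r ⟨i, by have := j.isLt; omega⟩
    else if h' : (j : ℕ) + 1 = (i : ℕ) then r ⟨j, by have := i.isLt; omega⟩
    else 0

/-- The character sum `S_n = ∑_A χ(det A)` over all `n × n` symmetric tridiagonal
matrices over `F_q`. -/
def charSumST (F : Type*) [Field F] [Fintype F] [DecidableEq F] (n : ℕ) : ℤ :=
  ∑ p : (Fin n → F) × (Fin (n - 1) → F), quadraticChar F (triMat n p.1 p.2).det

/-!
Expanding the determinant of a symmetric tridiagonal matrix along its first row gives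
`D_{n+2} = a D_{n+1} - b² D_n`, where `a`, `b` are the first diagonal and off-diagonal entries and
`D_{n+1}`, `D_n` are the determinants of the trailing principal minors. Summing `χ(a D_{n+1} - b² D_n)`
over `a` kills every term with `D_{n+1} ≠ 0`, and for `D_{n+1} = 0` the sum over `a, b` is
`q (q - 1) χ(-D_n) = q (q - 1) χ(D_n)` since `χ(-1) = 1`. Hence `S_{n+2} = q (q - 1) T_n`, where `T_n`
sums `χ(D_n)` over the data with `D_{n+1} = 0`. Conversely, for `D_{n+1} ≠ 0` the equation
`a D_{n+1} = b² D_n` has exactly `q` solutions `(a, b)`, so `T_{n+1} = q S_{n+1}`, and `T_0 = 1`.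
Thus `S_2 = q (q - 1)` and `S_{2m+2} = q² (q - 1) S_{2m}`.
-/

namespace Matrix

variable {R : Type*} [CommRing R]

theorem det_succ_succ_of_row_zero_col_zero {n : ℕ} (M : Matrix (Fin (n + 2)) (Fin (n + 2)) R)
    (hrow : ∀ j : Fin n, M 0 j.succ.succ = 0) (hcol : ∀ i : Fin n, M i.succ.succ 0 = 0) :
    M.det = M 0 0 * (M.submatrix Fin.succ Fin.succ).det -
      M 0 1 * M 1 0 * ((M.submatrix Fin.succ Fin.succ).submatrix Fin.succ Fin.succ).det := by
  -- deleting row `0` and column `1` leaves a matrix with first column `(M 1 0, 0, …, 0)`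
  have hminor : (M.submatrix Fin.succ (Fin.succ 0).succAbove).det =
      M 1 0 * ((M.submatrix Fin.succ Fin.succ).submatrix Fin.succ Fin.succ).det := by
    rw [det_succ_column_zero, Fin.sum_univ_succ,
      Finset.sum_eq_zero fun i _ => by simp [hcol]]
    simp [Function.comp_def]
  rw [det_succ_row_zero, Fin.sum_univ_succ, Fin.sum_univ_succ,
    Finset.sum_eq_zero fun j _ => by simp [hrow], hminor]
  simp only [Fin.val_zero, Fin.val_one, Fin.succ_zero_eq_one, Fin.succAbove_zero,
    submatrix_submatrix, add_zero]
  ring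

end Matrix

section TriMat

variable {R : Type*} [CommRing R] {n : ℕ}

/-- Unlike `Fin.tail`, defined for every length `n`, as the off-diagonal of `triMat n` needs. -/
def dropHead {α : Type*} (r : Fin n → α) : Fin (n - 1) → α := fun i => r ⟨i + 1, by omega⟩

@[simp]
theorem dropHead_cons {α : Type*} (b : α) (r : Fin n → α) :
    dropHead (Fin.cons b r : Fin (n + 1) → α) = r :=
  rfl

theorem triMat_submatrix_succ (x : Fin (n + 1) → R) (r : Fin n → R) :
    (triMat (n + 1) x r).submatrix Fin.succ Fin.succ = triMat n (Fin.tail x) (dropHead r) := by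
  ext i j
  simp only [Matrix.submatrix_apply, triMat, Matrix.of_apply, Fin.val_succ, Fin.succ_inj,
    Fin.tail, dropHead]
  split_ifs <;> first | rfl | omega

theorem det_triMat_cons_cons (a b : R) (x : Fin (n + 1) → R) (r : Fin n → R) :
    (triMat (n + 2) (Fin.cons a x) (Fin.cons b r)).det =
      a * (triMat (n + 1) x r).det - b ^ 2 * (triMat n (Fin.tail x) (dropHead r)).det := by
  set M := triMat (n + 2) (Fin.cons a x) (Fin.cons b r)
  have h00 : M 0 0 = a := by simp [M, triMat]
  have h01 : M 0 1 = b := by simp [M, triMat]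
  have h10 : M 1 0 = b := by simp [M, triMat]
  rw [Matrix.det_succ_succ_of_row_zero_col_zero M
    (fun j => by simp [M, triMat, (Fin.succ_ne_zero _).symm]) (fun i => by simp [M, triMat]),
    triMat_submatrix_succ, triMat_submatrix_succ, Fin.tail_cons, dropHead_cons, h00, h01, h10]
  ring

end TriMat

theorem Fintype.sum_prod_pi_fin_succ_succ {α M : Type*} [Fintype α] [AddCommMonoid M] {n : ℕ}
    (f : (Fin (n + 2) → α) × (Fin (n + 1) → α) → M) :
    ∑ p, f p =
      ∑ p : (Fin (n + 1) → α) × (Fin n → α), ∑ a, ∑ b, f (Fin.cons a p.1, Fin.cons b p.2) := by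
  rw [← ((Equiv.prodProdProdComm α α _ _).trans
    ((Fin.consEquiv fun _ => α).prodCongr (Fin.consEquiv fun _ => α))).sum_comp,
    Fintype.sum_prod_type, Finset.sum_comm]
  simp only [Fintype.sum_prod_type]
  rfl

section QuadraticChar

variable {F : Type*} [Field F] [Fintype F] [DecidableEq F]

theorem sum_quadraticChar_sq_mul (b : F) :
    ∑ t : F, quadraticChar F (t ^ 2 * b) = (Fintype.card F - 1) * quadraticChar F b := by
  have hsq (t : F) : quadraticChar F (t ^ 2) = 1 - if t = 0 then 1 else 0 := by
    split_ifs with ht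
    · simp [ht]
    · simp [quadraticChar_sq_one' ht]
  simp only [map_mul, hsq, ← Finset.sum_mul, Finset.sum_sub_distrib]
  simp

theorem sum_sum_quadraticChar_mul_sub_sq_mul (hF : ringChar F ≠ 2)
    (hneg : quadraticChar F (-1) = 1) (a b : F) :
    ∑ s : F, ∑ t : F, quadraticChar F (s * a - t ^ 2 * b) =
      if a = 0 then Fintype.card F * (Fintype.card F - 1) * quadraticChar F b else 0 := by
  split_ifs with ha
  · have hb : quadraticChar F (-b) = quadraticChar F b := by
      rw [neg_eq_neg_one_mul, map_mul, hneg, one_mul]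
    simp only [ha, mul_zero, zero_sub, ← mul_neg, sum_quadraticChar_sq_mul, hb,
      Finset.sum_const, Finset.card_univ, nsmul_eq_mul]
    ring
  · rw [Finset.sum_comm]
    refine Finset.sum_eq_zero fun t _ => ?_
    exact ((Equiv.mulRight₀ a ha).trans (Equiv.subRight (t ^ 2 * b))).sum_comp
      (quadraticChar F) |>.trans (quadraticChar_sum_zero hF)

theorem sum_sum_ite_mul_sub_sq_mul_eq_zero (a b : F) :
    ∑ s : F, ∑ t : F, (if s * a - t ^ 2 * b = 0 then quadraticChar F a else 0) =
      Fintype.card F * quadraticChar F a := by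
  rcases eq_or_ne a 0 with rfl | ha
  · simp
  rw [Finset.sum_comm]
  have hunique (s t : F) : s * a - t ^ 2 * b = 0 ↔ s = t ^ 2 * b * a⁻¹ := by
    rw [sub_eq_zero, eq_mul_inv_iff_mul_eq₀ ha]
  simp [hunique]

end QuadraticChar

section CharSumST

variable (F : Type*) [Field F] [Fintype F] [DecidableEq F]

/-- The sum `T_n = ∑ χ(det A')` over the singular `A` of size `n + 1`, where `A'` is `A` without
its first row and column. -/
def charSumSTSingular (n : ℕ) : ℤ :=
  ∑ p : (Fin (n + 1) → F) × (Fin n → F),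
    if (triMat (n + 1) p.1 p.2).det = 0 then
      quadraticChar F (triMat n (Fin.tail p.1) (dropHead p.2)).det
    else 0

variable {F}

theorem charSumST_add_two (hF : ringChar F ≠ 2) (hneg : quadraticChar F (-1) = 1) (n : ℕ) :
    charSumST F (n + 2) =
      Fintype.card F * (Fintype.card F - 1) * charSumSTSingular F n := by
  rw [charSumST, charSumSTSingular, Finset.mul_sum]
  refine (Fintype.sum_prod_pi_fin_succ_succ _).trans (Finset.sum_congr rfl fun p _ => ?_)
  simp only [det_triMat_cons_cons, sum_sum_quadraticChar_mul_sub_sq_mul hF hneg, mul_ite,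
    mul_zero]

theorem charSumSTSingular_add_one (n : ℕ) :
    charSumSTSingular F (n + 1) = Fintype.card F * charSumST F (n + 1) := by
  rw [charSumST, charSumSTSingular, Finset.mul_sum]
  refine (Fintype.sum_prod_pi_fin_succ_succ _).trans (Finset.sum_congr rfl fun p _ => ?_)
  simp only [det_triMat_cons_cons, Fin.tail_cons, dropHead_cons,
    sum_sum_ite_mul_sub_sq_mul_eq_zero]

theorem charSumSTSingular_zero : charSumSTSingular F 0 = 1 := by
  have hdet (x : Fin 1 → F) (r : Fin 0 → F) : (triMat 1 x r).det = x 0 := by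
    simp [triMat]
  simp only [charSumSTSingular, hdet, Matrix.det_isEmpty, map_one, Fintype.sum_prod_type,
    Fintype.sum_unique]
  rw [← (Equiv.funUnique (Fin 1) F).symm.sum_comp]
  simp

end CharSumST

/-- For `q ≡ 1 (mod 4)` an odd prime power, `S_{2m} = q^{2m-1} (q-1)^m` for all `m ≥ 1`. -/
theorem charSumST_even_one_mod_four (F : Type*) [Field F] [Fintype F] [DecidableEq F]
    (hq : Odd (Fintype.card F)) (hq4 : Fintype.card F % 4 = 1) :
    ∀ m : ℕ, 1 ≤ m →
      charSumST F (2 * m) =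
        (Fintype.card F : ℤ) ^ (2 * m - 1) * ((Fintype.card F : ℤ) - 1) ^ m := by
  have hF : ringChar F ≠ 2 := fun h => by
    have := FiniteField.even_card_of_char_two h
    rw [Nat.odd_iff] at hq
    omega
  have hneg : quadraticChar F (-1) = 1 := by
    rw [quadraticChar_neg_one hF]
    exact ZMod.χ₄_nat_one_mod_four hq4
  have hrec (k : ℕ) : charSumST F (2 * k + 2) =
      (Fintype.card F : ℤ) ^ (2 * k + 1) * ((Fintype.card F : ℤ) - 1) ^ (k + 1) := by
    induction k with
    | zero => rw [charSumST_add_two hF hneg, charSumSTSingular_zero]; ring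
    | succ k ih =>
      rw [show 2 * (k + 1) + 2 = 2 * k + 2 + 2 by ring, charSumST_add_two hF hneg,
        charSumSTSingular_add_one, ih]
      ring
  intro m hm
  obtain ⟨k, rfl⟩ := Nat.exists_eq_add_of_le' hm
  simpa [mul_add] using hrec k
end

section
/- Let q be a prime power, n ≥ 1, and let a, a' ∈ F_q be nonzero elements such that a/a' is a square in F_q. Then the number of n×n symmetric tridiagonal matrices over F_q with determinant a equals the number with determinant a'. -/
/-- The number of `n × n` symmetric tridiagonal matrices over `F` with determinant `a`. -/
def stCard (F : Type*) [Field F] [Fintype F] [DecidableEq F] (n : ℕ) (a : F) : ℕ :=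
  Fintype.card {p : (Fin n → F) × (Fin (n - 1) → F) // (triMat n p.1 p.2).det = a}

section aux
variable {F : Type*} [Field F]

/-- scale the last diagonal entry by `c*c` and last off-diagonal by `c`. -/
def scaleLast (n : ℕ) (c : F) (p : (Fin n → F) × (Fin (n - 1) → F)) :
    (Fin n → F) × (Fin (n - 1) → F) :=
  (fun i => if (i : ℕ) + 1 = n then c * c * p.1 i else p.1 i,
   fun j => if (j : ℕ) + 2 = n then c * p.2 j else p.2 j)

lemma tri_scale (n : ℕ) (c : F) (p : (Fin n → F) × (Fin (n - 1) → F)) :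
    triMat n (scaleLast n c p).1 (scaleLast n c p).2 =
      Matrix.diagonal (fun i : Fin n => if (i : ℕ) + 1 = n then c else 1) *
        triMat n p.1 p.2 *
      Matrix.diagonal (fun i : Fin n => if (i : ℕ) + 1 = n then c else 1) := by
  ext i j
  simp only [Matrix.diagonal_mul, Matrix.mul_diagonal, triMat, scaleLast, Matrix.of_apply]
  by_cases hij : i = j
  · subst hij
    simp only [if_pos rfl]
    by_cases hl : (i : ℕ) + 1 = n <;> simp [hl] <;> ring
  · simp only [if_neg hij]
    by_cases h1 : (i : ℕ) + 1 = (j : ℕ)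
    · have hi : ¬ ((i : ℕ) + 1 = n) := by have := j.isLt; omega
      have hij2 : ((j : ℕ) + 1 = n) ↔ ((i : ℕ) + 2 = n) := by omega
      simp only [dif_pos h1, hi, if_false, one_mul]
      by_cases hj : (j : ℕ) + 1 = n
      · simp [hj, hij2.mp hj, mul_comm]
      · have hni : ¬ ((i : ℕ) + 2 = n) := fun hh => hj (hij2.mpr hh)
        simp [hj, hni]
    · simp only [dif_neg h1]
      by_cases h2 : (j : ℕ) + 1 = (i : ℕ)
      · have hj : ¬ ((j : ℕ) + 1 = n) := by have := i.isLt; omega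
        have hij2 : ((i : ℕ) + 1 = n) ↔ ((j : ℕ) + 2 = n) := by omega
        simp only [dif_pos h2, hj, if_false, mul_one]
        by_cases hi : (i : ℕ) + 1 = n
        · simp [hi, hij2.mp hi, mul_comm]
        · have hnj : ¬ ((j : ℕ) + 2 = n) := fun hh => hi (hij2.mpr hh)
          simp [hi, hnj]
      · simp [h1, h2]

lemma det_scale (n : ℕ) (hn : 1 ≤ n) (c : F) (p : (Fin n → F) × (Fin (n - 1) → F)) :
    (triMat n (scaleLast n c p).1 (scaleLast n c p).2).det =
      c * c * (triMat n p.1 p.2).det := by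
  rw [tri_scale, Matrix.det_mul, Matrix.det_mul, Matrix.det_diagonal]
  have : ∏ i : Fin n, (if (i : ℕ) + 1 = n then c else 1) = c := by
    have hi0 : (⟨n - 1, by omega⟩ : Fin n) ∈ Finset.univ := Finset.mem_univ _
    rw [Finset.prod_eq_single_of_mem (⟨n - 1, by omega⟩ : Fin n) hi0]
    · simp; omega
    · intro b _ hb
      have : ¬ ((b : ℕ) + 1 = n) := by
        intro hh
        apply hb
        apply Fin.ext
        simp
        omega
      simp [this]
  rw [this]; ring

lemma scaleLast_inv (n : ℕ) (c : F) (hc : c ≠ 0) (p : (Fin n → F) × (Fin (n - 1) → F)) :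
    scaleLast n c⁻¹ (scaleLast n c p) = p := by
  unfold scaleLast
  refine Prod.ext ?_ ?_
  · funext i
    by_cases h : (i : ℕ) + 1 = n
    · simp only [h, if_true]
      field_simp
    · simp [h]
  · funext i
    by_cases h : (i : ℕ) + 2 = n
    · simp only [h, if_true]
      field_simp
    · simp [h]

lemma stCard_scale (F : Type*) [Field F] [Fintype F] [DecidableEq F]
    (n : ℕ) (hn : 1 ≤ n) (c : F) (hc : c ≠ 0) (b : F) :
    stCard F n (c * c * b) = stCard F n b := by
  unfold stCard
  apply Fintype.card_congr
  refine { toFun := fun p => ⟨scaleLast n c⁻¹ p.1, ?_⟩,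
           invFun := fun p => ⟨scaleLast n c p.1, ?_⟩,
           left_inv := ?_, right_inv := ?_ }
  · obtain ⟨p, hp⟩ := p
    rw [det_scale n hn, hp]
    field_simp
  · obtain ⟨p, hp⟩ := p
    rw [det_scale n hn, hp]
  · rintro ⟨p, hp⟩
    simp only [Subtype.mk.injEq]
    have := scaleLast_inv n c⁻¹ (inv_ne_zero hc) p
    rwa [inv_inv] at this
  · rintro ⟨p, hp⟩
    simp only [Subtype.mk.injEq]
    exact scaleLast_inv n c hc p

end aux

/-- If `a, a'` are nonzero and `a / a'` is a square, then the numbers of `n × n`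
symmetric tridiagonal matrices with determinants `a` and `a'` coincide. -/
theorem stCard_square_class (F : Type*) [Field F] [Fintype F] [DecidableEq F]
    (n : ℕ) (hn : 1 ≤ n) (a a' : F) (ha : a ≠ 0) (ha' : a' ≠ 0)
    (h : IsSquare (a / a')) :
    stCard F n a = stCard F n a' := by
  obtain ⟨r, hr⟩ := h
  have hr0 : r ≠ 0 := by
    intro h0
    rw [h0, mul_zero] at hr
    exact ha (by field_simp at hr; simpa using hr)
  have : a = r * r * a' := by
    field_simp at hr
    linear_combination hr
  rw [this, stCard_scale F n hn r hr0 a']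
end

section
/- Let q be a prime power, n an odd positive integer, and a ∈ F_q nonzero. Then the number of n×n symmetric tridiagonal matrices over F_q with determinant a equals the number with determinant 1. -/
section aux
variable {F : Type*} [Field F]

lemma prod_alt (a : F) (ha : a ≠ 0) (k : ℕ) :
    (∏ i : Fin (2*k+1), (if Even (i:ℕ) then a else a⁻¹)) = a := by
  induction k with
  | zero => simp
  | succ k ih =>
    have h1 : 2*(k+1)+1 = (2*k+1) + 1 + 1 := by ring
    rw [h1, Fin.prod_univ_castSucc, Fin.prod_univ_castSucc]
    simp only [Fin.coe_castSucc, Fin.val_last]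
    have he1 : ¬ Even (2*k+1) := by simp [Nat.even_add_one, parity_simps]
    have he2 : Even (2*k+1+1) := by simp [Nat.even_add_one, parity_simps]
    rw [if_neg he1, if_pos he2, ih]
    field_simp

lemma det_scale_s12 {n : ℕ} (hn : Odd n) (a : F) (ha : a ≠ 0) (x : Fin n → F)
    (r : Fin (n-1) → F) :
    (triMat n (fun i => (if Even (i:ℕ) then a else a⁻¹) * x i) r).det
      = a * (triMat n x r).det := by
  set d : Fin n → F := fun i => if Even (i:ℕ) then a else 1 with hd
  set e : Fin n → F := fun i => if Even (i:ℕ) then 1 else a⁻¹ with he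
  have key : triMat n (fun i => (if Even (i:ℕ) then a else a⁻¹) * x i) r
      = Matrix.diagonal d * triMat n x r * Matrix.diagonal e := by
    ext i j
    rw [Matrix.mul_diagonal, Matrix.diagonal_mul]
    simp only [triMat, Matrix.of_apply, hd, he]
    rcases eq_or_ne i j with h1 | h1
    · subst h1
      rw [if_pos rfl, if_pos rfl]
      by_cases hp : Even (i:ℕ)
      · rw [if_pos hp, if_pos hp, if_pos hp]; ring
      · rw [if_neg hp, if_neg hp, if_neg hp]; ring
    · rw [if_neg h1, if_neg h1]
      by_cases h2 : (i:ℕ) + 1 = (j:ℕ)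
      · rw [dif_pos h2]
        have hp : Even ((j:ℕ)) ↔ ¬ Even (i:ℕ) := by
          rw [← h2, Nat.even_add_one]
        by_cases hpi : Even (i:ℕ)
        · rw [if_pos hpi, if_neg (fun h => (hp.mp h) hpi)]
          field_simp
        · rw [if_neg hpi, if_pos (hp.mpr hpi)]; ring
      · rw [dif_neg h2]
        by_cases h3 : (j:ℕ) + 1 = (i:ℕ)
        · rw [dif_pos h3]
          have hp : Even ((i:ℕ)) ↔ ¬ Even (j:ℕ) := by
            rw [← h3, Nat.even_add_one]
          by_cases hpj : Even (j:ℕ)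
          · rw [if_pos hpj, if_neg (fun h => (hp.mp h) hpj)]
            field_simp
          · rw [if_neg hpj, if_pos (hp.mpr hpj)]; field_simp
        · rw [dif_neg h3]; ring
  rw [key, Matrix.det_mul, Matrix.det_mul, Matrix.det_diagonal, Matrix.det_diagonal]
  have hde : (∏ i, d i) * (∏ i, e i) = a := by
    rw [← Finset.prod_mul_distrib]
    have : ∀ i : Fin n, d i * e i = (if Even (i:ℕ) then a else a⁻¹) := by
      intro i; simp only [hd, he]; split_ifs <;> ring
    rw [Finset.prod_congr rfl fun i _ => this i]
    obtain ⟨k, hk⟩ := hn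
    subst hk
    exact prod_alt a ha k
  calc (∏ i, d i) * (triMat n x r).det * (∏ i, e i)
      = ((∏ i, d i) * (∏ i, e i)) * (triMat n x r).det := by ring
    _ = a * (triMat n x r).det := by rw [hde]

def sclEquiv (n : ℕ) (a : F) (ha : a ≠ 0) :
    ((Fin n → F) × (Fin (n-1) → F)) ≃ ((Fin n → F) × (Fin (n-1) → F)) where
  toFun p := (fun i => (if Even (i:ℕ) then a else a⁻¹) * p.1 i, p.2)
  invFun p := (fun i => (if Even (i:ℕ) then a⁻¹ else a) * p.1 i, p.2)
  left_inv p := by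
    ext i
    · simp only
      split_ifs <;> field_simp
    · rfl
  right_inv p := by
    ext i
    · simp only
      split_ifs <;> field_simp
    · rfl

end aux

/-- For odd `n` and nonzero `a`, the number of `n × n` symmetric tridiagonal matrices
with determinant `a` equals the number with determinant `1`. -/
theorem stCard_odd_dim (F : Type*) [Field F] [Fintype F] [DecidableEq F]
    (n : ℕ) (hn : Odd n) (a : F) (ha : a ≠ 0) :
    stCard F n a = stCard F n 1 := by
  have ha' : a⁻¹ ≠ 0 := inv_ne_zero ha
  unfold stCard
  refine Fintype.card_congr (Equiv.subtypeEquiv (sclEquiv n a⁻¹ ha') fun p => ?_)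
  have hds := det_scale_s12 hn a⁻¹ ha' p.1 p.2
  simp only [sclEquiv, Equiv.coe_fn_mk]
  rw [hds]
  constructor
  · rintro h; rw [h]; exact inv_mul_cancel₀ ha
  · intro h
    have := congrArg (a * ·) h
    simpa [← mul_assoc, mul_inv_cancel₀ ha] using this
end

section
/- Let R be a commutative finite chain ring with residue field F_q (q odd) and nilpotency index e. Define S_n(R) = Σ_A η(det A) over all n×n symmetric tridiagonal matrices A over R, where η(a) = χ(a mod γR) and χ is the quadratic character of F_q. Then S_n(R) = q^{(e−1)(2n−1)} · S_n(F_q), where S_n(F_q) = Σ_B χ(det B) over n×n symmetric tridiagonal matrices B over F_q. -/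
lemma triMat_map {R S : Type*} [CommRing R] [CommRing S] (f : R →+* S) (n : ℕ)
    (x : Fin n → R) (r : Fin (n - 1) → R) :
    (triMat n x r).map f = triMat n (f ∘ x) (f ∘ r) := by
  ext i j
  simp only [triMat, Matrix.map_apply, Matrix.of_apply, Function.comp_apply]
  split_ifs <;> simp

lemma card_span_step {R : Type*} [CommRing R] [Finite R] [IsLocalRing R] (γ : R) (e i : ℕ)
    (hmax : IsLocalRing.maximalIdeal R = Ideal.span {γ}) (hnil : γ ^ e = 0)
    (hlast : γ ^ (e - 1) ≠ 0) (hi : i < e) :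
    Nat.card (Ideal.span {γ ^ i} : Ideal R) =
      Nat.card (IsLocalRing.ResidueField R) * Nat.card (Ideal.span {γ ^ (i + 1)} : Ideal R) := by
  classical
  obtain ⟨s, hs⟩ : ∃ s : IsLocalRing.ResidueField R → R, ∀ b, IsLocalRing.residue R (s b) = b :=
    ⟨Function.surjInv IsLocalRing.residue_surjective, fun b => Function.surjInv_eq _ b⟩
  have hres0 : ∀ x : R, x ∈ IsLocalRing.maximalIdeal R → IsLocalRing.residue R x = 0 := by
    intro x hx
    rw [← IsLocalRing.ker_residue] at hx
    exact hx
  have hunit : ∀ b b' : IsLocalRing.ResidueField R, b ≠ b' → IsUnit (s b - s b') := by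
    intro b b' hbb
    rw [← IsLocalRing.notMem_maximalIdeal]
    intro hmem
    have h0 := hres0 _ hmem
    rw [map_sub, hs, hs, sub_eq_zero] at h0
    exact hbb h0
  set f : IsLocalRing.ResidueField R × (Ideal.span {γ ^ (i + 1)} : Ideal R) →
      (Ideal.span {γ ^ i} : Ideal R) := fun p =>
    ⟨γ ^ i * s p.1 + (p.2 : R), by
      refine Ideal.add_mem _ (Ideal.mem_span_singleton'.mpr ⟨s p.1, mul_comm _ _⟩) ?_
      exact Ideal.span_singleton_le_span_singleton.mpr (pow_dvd_pow γ (Nat.le_succ i)) p.2.2⟩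
      with hf
  have hbij : Function.Bijective f := by
    constructor
    · rintro ⟨b, m⟩ ⟨b', m'⟩ hEq
      have h1 : γ ^ i * s b + (m : R) = γ ^ i * s b' + (m' : R) := congrArg Subtype.val hEq
      have hb : b = b' := by
        by_contra hbb
        obtain ⟨u, hu⟩ := hunit b b' hbb
        have h3 : γ ^ i * (s b - s b') ∈ Ideal.span {γ ^ (i + 1)} := by
          have : γ ^ i * (s b - s b') = (m' : R) - (m : R) := by linear_combination h1
          rw [this]
          exact Ideal.sub_mem _ m'.2 m.2
        rw [← hu] at h3
        have h4 := Ideal.mul_mem_right ((↑u⁻¹ : R)) _ h3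
        rw [mul_assoc, Units.mul_inv, mul_one] at h4
        obtain ⟨c, hc⟩ := Ideal.mem_span_singleton'.mp h4
        apply hlast
        have h5 : γ ^ (e - 1) = γ ^ (e - 1 - i) * γ ^ i := by
          rw [← pow_add]; congr 1; omega
        have h6 : γ ^ (e - 1 - i) * (c * γ ^ (i + 1)) = c * γ ^ e := by
          rw [show c * γ ^ e = c * (γ ^ (e - 1 - i) * γ ^ (i + 1)) by
            rw [← pow_add]; congr 2; omega]
          ring
        rw [h5, ← hc, h6, hnil, mul_zero]
      subst hb
      have hm : (m : R) = (m' : R) := by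
        have := add_left_cancel h1
        exact this
      exact Prod.ext rfl (Subtype.ext hm)
    · rintro ⟨x, hx⟩
      obtain ⟨c, hc⟩ := Ideal.mem_span_singleton'.mp hx
      have hmem : x - γ ^ i * s (IsLocalRing.residue R c) ∈ Ideal.span {γ ^ (i + 1)} := by
        have h0 : c - s (IsLocalRing.residue R c) ∈ IsLocalRing.maximalIdeal R := by
          rw [← IsLocalRing.ker_residue, RingHom.mem_ker, map_sub, hs, sub_self]
        rw [hmax, Ideal.mem_span_singleton] at h0
        obtain ⟨d, hd⟩ := h0
        refine Ideal.mem_span_singleton.mpr ⟨d, ?_⟩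
        rw [← hc]
        linear_combination (γ ^ i) * hd
      refine ⟨⟨IsLocalRing.residue R c, ⟨x - γ ^ i * s (IsLocalRing.residue R c), hmem⟩⟩, ?_⟩
      rw [hf]
      exact Subtype.ext (by simp)
  rw [← Nat.card_prod]
  exact (Nat.card_eq_of_bijective f hbij).symm

lemma card_span_pow {R : Type*} [CommRing R] [Finite R] [IsLocalRing R] (γ : R) (e : ℕ)
    (hmax : IsLocalRing.maximalIdeal R = Ideal.span {γ}) (hnil : γ ^ e = 0)
    (hmin : ∀ i < e, γ ^ i ≠ 0) :
    ∀ j, j ≤ e → Nat.card (Ideal.span {γ ^ (e - j)} : Ideal R) =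
      Nat.card (IsLocalRing.ResidueField R) ^ j := by
  intro j
  induction j with
  | zero =>
    intro _
    rw [Nat.sub_zero, hnil, pow_zero]
    rw [show (Ideal.span {(0 : R)} : Ideal R) = ⊥ from Ideal.span_singleton_eq_bot.mpr rfl]
    exact Nat.card_unique
  | succ j ih =>
    intro hje
    have h1 : e - j = (e - (j + 1)) + 1 := by omega
    have h2 : e - (j + 1) < e := by omega
    have hlast : γ ^ (e - 1) ≠ 0 := hmin (e - 1) (by omega)
    rw [card_span_step γ e _ hmax hnil hlast h2, ← h1, ih (by omega), pow_succ]
    ring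

/-- Let `R` be a commutative finite chain ring with residue field `F_q` (`q` odd) and
nilpotency index `e`.  With `η = χ ∘ (reduction mod γR)`, the character sum
`S_n(R) = ∑_A η(det A)` over `n × n` symmetric tridiagonal matrices over `R` satisfies
`S_n(R) = q^{(e-1)(2n-1)} * S_n(F_q)`, where `S_n(F_q) = ∑_B χ(det B)`. -/
theorem charSumST_chainRing (R : Type*) [CommRing R] [Fintype R] [IsLocalRing R]
    [Fintype (IsLocalRing.ResidueField R)] [DecidableEq (IsLocalRing.ResidueField R)]
    (γ : R) (e : ℕ) (he : 1 ≤ e)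
    (hmax : IsLocalRing.maximalIdeal R = Ideal.span {γ})
    (hnil : γ ^ e = 0) (hmin : ∀ i < e, γ ^ i ≠ 0)
    (q : ℕ) (hq : Fintype.card (IsLocalRing.ResidueField R) = q) (hodd : Odd q)
    (n : ℕ) (hn : 1 ≤ n) :
    ∑ p : (Fin n → R) × (Fin (n - 1) → R),
        quadraticChar (IsLocalRing.ResidueField R)
          (IsLocalRing.residue R (triMat n p.1 p.2).det) =
      (q : ℤ) ^ ((e - 1) * (2 * n - 1)) *
        ∑ p : (Fin n → IsLocalRing.ResidueField R) × (Fin (n - 1) → IsLocalRing.ResidueField R),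
          quadraticChar (IsLocalRing.ResidueField R) (triMat n p.1 p.2).det := by
  classical
  obtain ⟨s, hs⟩ : ∃ s : IsLocalRing.ResidueField R → R,
      ∀ b, IsLocalRing.residue R (s b) = b :=
    ⟨Function.surjInv IsLocalRing.residue_surjective, fun b => Function.surjInv_eq _ b⟩
  have hres0 : ∀ x : R, x ∈ IsLocalRing.maximalIdeal R → IsLocalRing.residue R x = 0 := by
    intro x hx
    rw [← IsLocalRing.ker_residue] at hx
    exact hx
  -- cardinality of the maximal ideal
  have hM : Nat.card (IsLocalRing.maximalIdeal R) = q ^ (e - 1) := by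
    have h := card_span_pow γ e hmax hnil hmin (e - 1) (by omega)
    have h1 : e - (e - 1) = 1 := by omega
    rw [h1, pow_one] at h
    rw [hmax, h, Nat.card_eq_fintype_card, hq]
  -- an equivalence splitting tuples over `R`
  have keyE : ∀ t : ℕ, ∃ E : ((Fin t → IsLocalRing.ResidueField R) ×
        (Fin t → IsLocalRing.maximalIdeal R)) ≃ (Fin t → R),
      ∀ p i, IsLocalRing.residue R (E p i) = p.1 i := by
    intro t
    refine ⟨{
      toFun := fun p i => s (p.1 i) + ((p.2 i : R))
      invFun := fun x => ⟨fun i => IsLocalRing.residue R (x i),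
        fun i => ⟨x i - s (IsLocalRing.residue R (x i)), by
          rw [← IsLocalRing.ker_residue, RingHom.mem_ker, map_sub, hs, sub_self]⟩⟩
      left_inv := ?_
      right_inv := ?_}, ?_⟩
    · intro p
      have hr : ∀ i, IsLocalRing.residue R (s (p.1 i) + ((p.2 i : R))) = p.1 i := by
        intro i
        rw [map_add, hs, hres0 _ (p.2 i).2, add_zero]
      refine Prod.ext (funext fun i => hr i) (funext fun i => Subtype.ext ?_)
      simp only [hr i]
      exact add_sub_cancel_left _ _
    · intro x
      funext i
      exact add_sub_cancel _ _
    · intro p i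
      simp only [Equiv.coe_fn_mk]
      rw [map_add, hs, hres0 _ (p.2 i).2, add_zero]
  obtain ⟨E1, hE1⟩ := keyE n
  obtain ⟨E2, hE2⟩ := keyE (n - 1)
  have hdet : ∀ (x : Fin n → R) (r : Fin (n - 1) → R),
      IsLocalRing.residue R (triMat n x r).det =
        (triMat n (IsLocalRing.residue R ∘ x) (IsLocalRing.residue R ∘ r)).det := by
    intro x r
    rw [RingHom.map_det, RingHom.mapMatrix_apply, triMat_map]
  calc
    ∑ p : (Fin n → R) × (Fin (n - 1) → R),
        quadraticChar (IsLocalRing.ResidueField R)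
          (IsLocalRing.residue R (triMat n p.1 p.2).det)
      = ∑ z : ((Fin n → IsLocalRing.ResidueField R) × (Fin n → IsLocalRing.maximalIdeal R)) ×
            ((Fin (n - 1) → IsLocalRing.ResidueField R) ×
              (Fin (n - 1) → IsLocalRing.maximalIdeal R)),
          quadraticChar (IsLocalRing.ResidueField R) (IsLocalRing.residue R
            (triMat n (E1 z.1) (E2 z.2)).det) := by
        exact (Equiv.sum_comp (E1.prodCongr E2)
          (fun p : (Fin n → R) × (Fin (n - 1) → R) =>
            quadraticChar (IsLocalRing.ResidueField R)
              (IsLocalRing.residue R (triMat n p.1 p.2).det))).symm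
    _ = ∑ z : ((Fin n → IsLocalRing.ResidueField R) × (Fin n → IsLocalRing.maximalIdeal R)) ×
            ((Fin (n - 1) → IsLocalRing.ResidueField R) ×
              (Fin (n - 1) → IsLocalRing.maximalIdeal R)),
          quadraticChar (IsLocalRing.ResidueField R) (triMat n z.1.1 z.2.1).det := by
        refine Finset.sum_congr rfl fun z _ => ?_
        rw [hdet]
        have h1 : (IsLocalRing.residue R) ∘ E1 z.1 = z.1.1 := funext fun i => hE1 z.1 i
        have h2 : (IsLocalRing.residue R) ∘ E2 z.2 = z.2.1 := funext fun i => hE2 z.2 i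
        rw [h1, h2]
    _ = ∑ w : ((Fin n → IsLocalRing.ResidueField R) × (Fin (n - 1) → IsLocalRing.ResidueField R)) ×
            ((Fin n → IsLocalRing.maximalIdeal R) × (Fin (n - 1) → IsLocalRing.maximalIdeal R)),
          quadraticChar (IsLocalRing.ResidueField R) (triMat n w.1.1 w.1.2).det := by
        exact Equiv.sum_comp
          (Equiv.prodProdProdComm (Fin n → IsLocalRing.ResidueField R)
            (Fin n → IsLocalRing.maximalIdeal R) (Fin (n - 1) → IsLocalRing.ResidueField R)
            (Fin (n - 1) → IsLocalRing.maximalIdeal R))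
          (fun w => quadraticChar (IsLocalRing.ResidueField R) (triMat n w.1.1 w.1.2).det)
    _ = ∑ w1 : (Fin n → IsLocalRing.ResidueField R) × (Fin (n - 1) → IsLocalRing.ResidueField R),
          (Fintype.card ((Fin n → IsLocalRing.maximalIdeal R) ×
              (Fin (n - 1) → IsLocalRing.maximalIdeal R)) : ℤ) *
            quadraticChar (IsLocalRing.ResidueField R) (triMat n w1.1 w1.2).det := by
        rw [Fintype.sum_prod_type]
        refine Finset.sum_congr rfl fun w1 _ => ?_
        simp [Finset.sum_const, Finset.card_univ, nsmul_eq_mul]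
    _ = (q : ℤ) ^ ((e - 1) * (2 * n - 1)) *
          ∑ p : (Fin n → IsLocalRing.ResidueField R) × (Fin (n - 1) → IsLocalRing.ResidueField R),
            quadraticChar (IsLocalRing.ResidueField R) (triMat n p.1 p.2).det := by
        rw [← Finset.mul_sum]
        congr 1
        have hm : Fintype.card (IsLocalRing.maximalIdeal R) = q ^ (e - 1) := by
          rw [← Nat.card_eq_fintype_card, hM]
        have hc : Fintype.card ((Fin n → IsLocalRing.maximalIdeal R) ×
            (Fin (n - 1) → IsLocalRing.maximalIdeal R)) = q ^ ((e - 1) * (2 * n - 1)) := by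
          rw [Fintype.card_prod, Fintype.card_fun, Fintype.card_fun, hm,
            Fintype.card_fin, Fintype.card_fin, ← pow_mul, ← pow_mul, ← pow_add, ← Nat.mul_add,
            show n + (n - 1) = 2 * n - 1 by omega]
        rw [hc]
        push_cast
        ring
end
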